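/- Suppose scalar functions Θ, ξ, ψ with ξ nowhere zero satisfy 4ξψ + Θ² = 0, and dΘ = 2(xψ - yξ), dξ = uξ - xΘ, dψ = -uψ + yΘ for 1-forms u, x, y. Then η := Θ/(2ξ) satisfies dη = x η² - u η - y. -/
import Mathlib


/-- second branch of Lemma 3.1. If 4ξψ + Θ² = 0, ξ is a unit
(nowhere zero), and dΘ = 2(ψ•x - ξ•y), dξ = ξ•u - Θ•x, dψ = -ψ•u + Θ•y,
then η := Θ/(2ξ), i.e. the element η with 2ξη = Θ, satisfies
dη = η²•x - η•u - y. -/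
theorem stmt_14 (R M : Type*) [CommRing R] [Algebra ℂ R]
    [AddCommGroup M] [Module R M]
    (d : R → M)
    (hadd : ∀ a b : R, d (a + b) = d a + d b)
    (hleib : ∀ a b : R, d (a * b) = a • d b + b • d a)
    (Θ ξ ψ : R) (u x y : M)
    (hξunit : IsUnit ξ)
    (hdisc : 4 * ξ * ψ + Θ^2 = 0)
    (hΘ : d Θ = (2 : R) • (ψ • x - ξ • y))
    (hξ : d ξ = ξ • u - Θ • x)
    (hψ : d ψ = -(ψ • u) + Θ • y)
    (η : R) (hη : 2 * ξ * η = Θ) :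
    d η = η^2 • x - η • u - y := by
  have h2 : IsUnit (2 : R) := by
    have := (isUnit_iff_ne_zero.mpr (two_ne_zero (α := ℂ))).map (algebraMap ℂ R)
    rwa [map_ofNat] at this
  have hc : IsUnit ((2 : R) * ξ) := h2.mul hξunit
  have h4ξ : IsUnit ((4 : R) * ξ) := by
    have : (4 : R) * ξ = 2 * (2 * ξ) := by ring
    rw [this]; exact h2.mul hc
  -- value of ψ
  have hψval : ψ = -(ξ * η^2) := by
    have h : (4 * ξ) * ψ = (4 * ξ) * (-(ξ * η^2)) := by
      linear_combination hdisc + (2 * ξ * η + Θ) * hη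
    exact h4ξ.mul_left_cancel h
  -- compute d (2 * ξ * η) in two ways
  have hd2ξ : d ((2:R) * ξ) = d ξ + d ξ := by
    have : (2 : R) * ξ = ξ + ξ := by ring
    rw [this, hadd]
  have key : ((2:R) * ξ) • d η = ((2:R) * ξ) • (η^2 • x - η • u - y) := by
    have h1 : d ((2 * ξ) * η) = d Θ := by rw [← hη]
    rw [hleib, hd2ξ, hξ, hΘ, hψval] at h1
    have hΘval : Θ = 2 * ξ * η := hη.symm
    rw [hΘval] at h1
    have h2' : ((2:R) * ξ) • d η =
        (2 : R) • ((-(ξ * η^2)) • x - ξ • y) - η • ((ξ • u - (2 * ξ * η) • x) + (ξ • u - (2 * ξ * η) • x)) := by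
      rw [← h1]; abel
    rw [h2']
    module
  exact hc.smul_left_cancel.mp key
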